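/- Let n ≥ 1 be real, f ∈ (0,1), and 0 < ε₁ ≤ ε₂ with 1 ≤ ε₂/ε₁ ≤ R = 1 + 8/(ε₁² n f). Set ε̄ = f ε₁ + (1−f) ε₂ and ε²̄ = f ε₁² + (1−f) ε₂². Then for all w₁, w₂ ≥ 0 satisfying f w₁ + (1−f) w₂ = 1/n, one has Φ(w₁,w₂) ≥ Φ(ε₁/(n ε̄), ε₂/(n ε̄)) = ε²̄/(4 n ε̄²) + 2/(n ε̄)², where Φ(w₁,w₂) = n (f w₁² + (1−f) w₂²)/4 + 2 · max{w₁/ε₁, w₂/ε₂}². Moreover, the point (ε₁/(n ε̄), ε₂/(n ε̄)) satisfies the constraint. -/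
import Mathlib


noncomputable section

/-- Worst-case MSE objective of the affine estimator with weights `w₁` (for the
`n·f` users with privacy level `ε₁`) and `w₂` (for the `n·(1−f)` users with
privacy level `ε₂`). -/
def Phi (n f ε₁ ε₂ w₁ w₂ : ℝ) : ℝ :=
  n * (f * w₁ ^ 2 + (1 - f) * w₂ ^ 2) / 4 + 2 * (max (w₁ / ε₁) (w₂ / ε₂)) ^ 2

lemma sq_tangent_aux (a w : ℝ) : a ^ 2 + 2 * a * (w - a) ≤ w ^ 2 := by
  nlinarith [sq_nonneg (w - a)]

set_option maxHeartbeats 2000000 in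
theorem optimal_weights_regime_A
    (n f ε₁ ε₂ R εbar εsqbar : ℝ)
    (hn : 1 ≤ n) (hf0 : 0 < f) (hf1 : f < 1)
    (hε₁ : 0 < ε₁) (hε₁₂ : ε₁ ≤ ε₂)
    (hR : R = 1 + 8 / (ε₁ ^ 2 * n * f))
    (hr1 : 1 ≤ ε₂ / ε₁) (hrR : ε₂ / ε₁ ≤ R)
    (hεbar : εbar = f * ε₁ + (1 - f) * ε₂)
    (hεsqbar : εsqbar = f * ε₁ ^ 2 + (1 - f) * ε₂ ^ 2) :
    (f * (ε₁ / (n * εbar)) + (1 - f) * (ε₂ / (n * εbar)) = 1 / n) ∧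
    (Phi n f ε₁ ε₂ (ε₁ / (n * εbar)) (ε₂ / (n * εbar))
      = εsqbar / (4 * n * εbar ^ 2) + 2 / (n * εbar) ^ 2) ∧
    ∀ w₁ w₂ : ℝ, 0 ≤ w₁ → 0 ≤ w₂ → f * w₁ + (1 - f) * w₂ = 1 / n →
      Phi n f ε₁ ε₂ (ε₁ / (n * εbar)) (ε₂ / (n * εbar)) ≤ Phi n f ε₁ ε₂ w₁ w₂ := by
  have hn0 : (0:ℝ) < n := lt_of_lt_of_le one_pos hn
  have hε₂ : (0:ℝ) < ε₂ := lt_of_lt_of_le hε₁ hε₁₂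
  have h1f : (0:ℝ) < 1 - f := by linarith
  have he : (0:ℝ) < εbar := by rw [hεbar]; positivity
  have hne : (0:ℝ) < n * εbar := by positivity
  -- the regime condition in cleared form
  have h8 : n * f * ε₁ * (ε₂ - ε₁) ≤ 8 := by
    rw [hR] at hrR
    rw [div_le_iff₀ hε₁] at hrR
    have hden : (0:ℝ) < ε₁ ^ 2 * n * f := by positivity
    have hcancel : 8 / (ε₁ ^ 2 * n * f) * (ε₁ ^ 2 * n * f) = 8 :=
      div_mul_cancel₀ _ (ne_of_gt hden)
    nlinarith [hcancel, hden]
  -- candidate point value of max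
  have hmax_pt : max (ε₁ / (n * εbar) / ε₁) (ε₂ / (n * εbar) / ε₂) = 1 / (n * εbar) := by
    have h1 : ε₁ / (n * εbar) / ε₁ = 1 / (n * εbar) := by
      field_simp
    have h2 : ε₂ / (n * εbar) / ε₂ = 1 / (n * εbar) := by
      field_simp
    rw [h1, h2, max_self]
  constructor
  · field_simp
    rw [hεbar]
  constructor
  · unfold Phi
    rw [hmax_pt, hεsqbar]
    field_simp
  · intro w₁ w₂ hw₁ hw₂ hsum
    set m : ℝ := 1 / (n * εbar) with hm
    set θ : ℝ := (n * f * (1 - f) * ε₁ * ε₂ * (ε₂ - ε₁) / 2 + 4 * f * ε₁) / (4 * εbar)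
      with hθ
    have hθ0 : 0 ≤ θ := by
      apply div_nonneg _ (by positivity)
      have : 0 ≤ ε₂ - ε₁ := by linarith
      positivity
    have hθ1 : θ ≤ 1 := by
      rw [hθ, div_le_one (by positivity)]
      rw [hεbar]
      nlinarith [mul_pos h1f hε₂, h8]
    set c : ℝ := θ * (w₁ / ε₁) + (1 - θ) * (w₂ / ε₂) with hc
    have hc0 : 0 ≤ c := by
      apply add_nonneg
      · exact mul_nonneg hθ0 (div_nonneg hw₁ hε₁.le)
      · exact mul_nonneg (by linarith) (div_nonneg hw₂ hε₂.le)
    have hcM : c ≤ max (w₁ / ε₁) (w₂ / ε₂) := by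
      have h1 := le_max_left (w₁ / ε₁) (w₂ / ε₂)
      have h2 := le_max_right (w₁ / ε₁) (w₂ / ε₂)
      nlinarith [mul_le_mul_of_nonneg_left h1 hθ0,
        mul_le_mul_of_nonneg_left h2 (by linarith : (0:ℝ) ≤ 1 - θ)]
    have hsq : c ^ 2 ≤ (max (w₁ / ε₁) (w₂ / ε₂)) ^ 2 :=
      pow_le_pow_left₀ hc0 hcM 2
    -- convexity lower bounds
    have hq1 : (ε₁ * m) ^ 2 + 2 * (ε₁ * m) * (w₁ - ε₁ * m) ≤ w₁ ^ 2 :=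
      sq_tangent_aux (ε₁ * m) w₁
    have hq2 : (ε₂ * m) ^ 2 + 2 * (ε₂ * m) * (w₂ - ε₂ * m) ≤ w₂ ^ 2 :=
      sq_tangent_aux (ε₂ * m) w₂
    have hq3 : m ^ 2 + 2 * m * (c - m) ≤ c ^ 2 :=
      sq_tangent_aux m c
    -- the linear terms vanish on the constraint set (KKT multiplier `lam`)
    set lam : ℝ := ε₁ / (2 * εbar) + 4 * m * θ / (f * ε₁) with hlam
    have hlin_id : n * (f * (2 * (ε₁ * m) * (w₁ - ε₁ * m))
        + (1 - f) * (2 * (ε₂ * m) * (w₂ - ε₂ * m))) / 4 + 2 * (2 * m * (c - m))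
        = lam * (f * w₁ + (1 - f) * w₂ - 1 / n) := by
      rw [hlam, hc, hθ, hm, hεbar]
      have hεb' : (0:ℝ) < f * ε₁ + (1 - f) * ε₂ := by nlinarith
      field_simp
      ring
    have hlin : n * (f * (2 * (ε₁ * m) * (w₁ - ε₁ * m))
        + (1 - f) * (2 * (ε₂ * m) * (w₂ - ε₂ * m))) / 4 + 2 * (2 * m * (c - m)) = 0 := by
      rw [hlin_id, hsum]; ring
    -- candidate point weights equal ε_i * m
    have hw1p : ε₁ / (n * εbar) = ε₁ * m := by rw [hm]; ring
    have hw2p : ε₂ / (n * εbar) = ε₂ * m := by rw [hm]; ring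
    unfold Phi
    rw [hmax_pt, hw1p, hw2p]
    have H1 : n * f * ((ε₁ * m) ^ 2 + 2 * (ε₁ * m) * (w₁ - ε₁ * m)) ≤ n * f * w₁ ^ 2 :=
      mul_le_mul_of_nonneg_left hq1 (by positivity)
    have H2 : n * (1 - f) * ((ε₂ * m) ^ 2 + 2 * (ε₂ * m) * (w₂ - ε₂ * m))
        ≤ n * (1 - f) * w₂ ^ 2 :=
      mul_le_mul_of_nonneg_left hq2 (by positivity)
    clear_value m θ c lam
    clear hm hθ hc hlam hlin_id hθ0 hθ1 hc0 hcM hq1 hq2 hsum h8 hr1 hrR hR hεbar hεsqbar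
    linarith [hsq, hq3, hlin, H1, H2]
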